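/- arXiv:2009.03869 — 2 statements merged into one kernel-verified Lean document; each statement's English description precedes it below -/
import Mathlib

section
/- If p is a real polynomial of degree n ≥ 2 with n real roots x_1 < x_2 < ... < x_n (all simple), then the minimal gap between consecutive roots of p' is at least the minimal gap between consecutive roots of p. (Riesz's theorem on growth of the minimum root gap under differentiation.) -/
/-!
At a critical point `t` of `p = c ∏ (X - x_k)` that is not a root, the logarithmic derivative
vanishes: `∑ 1 / (t - x_k) = 0`. If two consecutive critical points `u < v` were closer than every
gap `x_{k+1} - x_k`, then pairing `u - x_k` with `v - x_{k+1}` (same sign, the second one smaller)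
would give `1 / (u - x_k) < 1 / (v - x_{k+1})`, and the two unpaired terms `1 / (u - x_n) < 0 <
1 / (v - x_1)` go the same way, so `∑ 1 / (u - x_k) < ∑ 1 / (v - x_k)`, although both sums vanish.
-/

open Polynomial

theorem Monotone.ne_of_lt_of_lt_fin {α : Type*} [Preorder α] {n : ℕ} {f : Fin n → α}
    (hf : Monotone f) {i : ℕ} (hi : i + 1 < n) {a : α} (h1 : f ⟨i, by omega⟩ < a)
    (h2 : a < f ⟨i + 1, hi⟩) (b : Fin n) : f b ≠ a := by
  rintro rfl
  rcases le_or_gt b.val i with hb | hb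
  · exact (hf (show b ≤ ⟨i, _⟩ from hb)).not_gt h1
  · exact (hf (show (⟨i + 1, hi⟩ : Fin n) ≤ b from hb)).not_gt h2

theorem Polynomial.roots_eq_map_of_natDegree_eq_card {R ι : Type*} [CommRing R] [IsDomain R]
    [Fintype ι] {p : R[X]} {x : ι → R} (hx : Function.Injective x)
    (hroots : ∀ i, p.IsRoot (x i)) (hdeg : p.natDegree = Fintype.card ι) :
    p.roots = Finset.univ.val.map x := by
  by_cases hp : p = 0
  · have : IsEmpty ι := Fintype.card_eq_zero_iff.mp (by simpa [hp] using hdeg.symm)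
    simp [hp]
  have hle : Finset.univ.val.map x ≤ p.roots :=
    (Multiset.le_iff_subset (Finset.univ.nodup.map hx)).mpr fun a ha => by
      obtain ⟨i, -, rfl⟩ := Multiset.mem_map.mp ha
      exact (mem_roots hp).mpr (hroots i)
  refine (Multiset.eq_of_le_of_card_le hle ?_).symm
  simpa [hdeg] using p.card_roots'

theorem Polynomial.sum_inv_sub_eq_zero_of_isRoot_derivative {K ι : Type*} [Field K]
    [Fintype ι] {p : K[X]} {x : ι → K} (hx : Function.Injective x)
    (hroots : ∀ i, p.IsRoot (x i)) (hdeg : p.natDegree = Fintype.card ι) {t : K}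
    (ht : p.derivative.IsRoot t) (hne : ∀ i, t ≠ x i) :
    ∑ i, (t - x i)⁻¹ = 0 := by
  have hroots_eq := roots_eq_map_of_natDegree_eq_card hx hroots hdeg
  by_cases hp : p = 0
  · have : IsEmpty ι := Fintype.card_eq_zero_iff.mp (by simpa [hp] using hdeg.symm)
    simp
  have hpt : p.eval t ≠ 0 := fun h => by
    obtain ⟨i, -, rfl⟩ := Multiset.mem_map.mp (hroots_eq ▸ (mem_roots hp).mpr h)
    exact hne i rfl
  have hsplit : p.Splits := splits_iff_card_roots.mpr (by simp [hroots_eq, hdeg])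
  have hlog := hsplit.eval_derivative_eq_eval_mul_sum hpt
  rw [ht.eq_zero, hroots_eq, Multiset.map_map, eq_comm, mul_eq_zero] at hlog
  simpa only [Function.comp_def, one_div, Finset.sum_eq_multiset_sum] using hlog.resolve_left hpt

theorem sum_inv_sub_lt_sum_inv_sub {m : ℕ} {x : Fin (m + 2) → ℝ} (hx : Monotone x)
    {u v : ℝ} {j : Fin (m + 2)} (hu : u < x j) (hv : x j < v)
    (hgap : ∀ k : Fin (m + 1), v - u < x k.succ - x k.castSucc) :
    ∑ k, (u - x k)⁻¹ < ∑ k, (v - x k)⁻¹ := by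
  have hpair : ∀ k : Fin (m + 1), (u - x k.castSucc)⁻¹ < (v - x k.succ)⁻¹ := by
    intro k
    have hlt : v - x k.succ < u - x k.castSucc := by linarith [hgap k]
    rcases lt_or_ge k.castSucc j with hk | hk
    · have : x k.succ ≤ x j := hx (Fin.castSucc_lt_iff_succ_le.mp hk)
      exact inv_strictAnti₀ (by linarith) hlt
    · have : x j ≤ x k.castSucc := hx hk
      exact (inv_lt_inv_of_neg (by linarith) (by linarith)).mpr hlt
  have hfirst : 0 < (v - x 0)⁻¹ := inv_pos.mpr (by linarith [hx (Fin.zero_le j)])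
  have hlast : (u - x (Fin.last (m + 1)))⁻¹ < 0 :=
    inv_lt_zero.mpr (by linarith [hx (Fin.le_last j)])
  calc ∑ k, (u - x k)⁻¹
      = ∑ k : Fin (m + 1), (u - x k.castSucc)⁻¹ + (u - x (Fin.last (m + 1)))⁻¹ :=
        Fin.sum_univ_castSucc _
    _ < ∑ k : Fin (m + 1), (v - x k.succ)⁻¹ + (v - x 0)⁻¹ := by
        gcongr ?_ + ?_
        · exact Finset.sum_lt_sum_of_nonempty Finset.univ_nonempty fun k _ => hpair k
        · linarith
    _ = ∑ k, (v - x k)⁻¹ := by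
        rw [add_comm]
        exact (Fin.sum_univ_succ fun k => (v - x k)⁻¹).symm

theorem riesz_min_gap (n : ℕ) (p : ℝ[X]) (hdeg : p.natDegree = n)
    (x : Fin n → ℝ) (hx : StrictMono x) (hroots : ∀ i, p.IsRoot (x i))
    (y : Fin (n - 1) → ℝ)
    (hyroots : ∀ i, (Polynomial.derivative p).IsRoot (y i))
    (hinter : ∀ i : ℕ, ∀ hi : i < n - 1,
      x ⟨i, by omega⟩ < y ⟨i, hi⟩ ∧ y ⟨i, hi⟩ < x ⟨i + 1, by omega⟩) :
    ∀ i : ℕ, ∀ hi : i + 1 < n - 1,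
      ∃ j : ℕ, ∃ hj : j + 1 < n,
        x ⟨j + 1, hj⟩ - x ⟨j, by omega⟩ ≤ y ⟨i + 1, hi⟩ - y ⟨i, by omega⟩ := by
  intro i hi
  obtain ⟨m, rfl⟩ : ∃ m, n = m + 2 := ⟨n - 2, by omega⟩
  by_contra! hgap
  have hcrit : ∀ l : Fin (m + 2 - 1), ∑ k, (y l - x k)⁻¹ = 0 := fun l =>
    sum_inv_sub_eq_zero_of_isRoot_derivative hx.injective hroots (by simpa using hdeg)
      (hyroots l) fun k =>
        (hx.monotone.ne_of_lt_of_lt_fin _ (hinter l l.isLt).1 (hinter l l.isLt).2 k).symm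
  have hlt := sum_inv_sub_lt_sum_inv_sub hx.monotone (hinter i (by omega)).2
    (hinter (i + 1) hi).1 fun k => hgap k (by omega)
  rw [hcrit, hcrit] at hlt
  exact lt_irrefl 0 hlt
end

section
/- The function u(t,x) = (2/π)√(1 − t − x²), defined on the region where 1 − t − x² > 0, satisfies the second conservation law of the root-flow: ∫∫ u(t,x)(x−y)² u(t,y) dx dy = (1−t)³ · ∫∫ u(0,x)(x−y)² u(0,y) dx dy for t ∈ [0,1]. -/
open MeasureTheory

theorem semicircle_second_conservation_law (t : ℝ) (ht : t ∈ Set.Icc (0:ℝ) 1) :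
    (∫ x : ℝ, ∫ y : ℝ,
        ((2 / Real.pi) * Real.sqrt (max (1 - t - x ^ 2) 0)) * (x - y) ^ 2 *
          ((2 / Real.pi) * Real.sqrt (max (1 - t - y ^ 2) 0)))
      = (1 - t) ^ 3 *
        ∫ x : ℝ, ∫ y : ℝ,
          ((2 / Real.pi) * Real.sqrt (max (1 - 0 - x ^ 2) 0)) * (x - y) ^ 2 *
            ((2 / Real.pi) * Real.sqrt (max (1 - 0 - y ^ 2) 0)) := by
  obtain ⟨ht0, ht1⟩ := ht
  have hs0 : 0 ≤ 1 - t := by linarith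
  rcases eq_or_lt_of_le hs0 with h0 | hpos
  · -- t = 1 case : everything vanishes
    have hL : ∀ x y : ℝ,
        ((2 / Real.pi) * Real.sqrt (max (1 - t - x ^ 2) 0)) * (x - y) ^ 2 *
          ((2 / Real.pi) * Real.sqrt (max (1 - t - y ^ 2) 0)) = 0 := by
      intro x y
      have hx : max (1 - t - x ^ 2) 0 = 0 :=
        max_eq_right (by nlinarith [sq_nonneg x])
      rw [hx, Real.sqrt_zero]
      ring
    simp only [hL]
    rw [← h0]
    simp
  · set c : ℝ := Real.sqrt (1 - t) with hc
    have hcpos : 0 < c := Real.sqrt_pos.mpr hpos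
    have hc2 : c ^ 2 = 1 - t := Real.sq_sqrt hs0
    set g : ℝ → ℝ := fun z => (2 / Real.pi) * Real.sqrt (max (1 - z ^ 2) 0) with hg
    have key : ∀ x : ℝ,
        (2 / Real.pi) * Real.sqrt (max (1 - t - x ^ 2) 0) = c * g (x / c) := by
      intro x
      have h1 : 1 - t - x ^ 2 = c ^ 2 * (1 - (x / c) ^ 2) := by
        have : (x / c) ^ 2 * c ^ 2 = x ^ 2 := by
          field_simp
        nlinarith [hc2]
      have h2 : max (c ^ 2 * (1 - (x / c) ^ 2)) 0 = c ^ 2 * max (1 - (x / c) ^ 2) 0 := by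
        rw [mul_max_of_nonneg _ _ (sq_nonneg c), mul_zero]
      rw [h1, h2, Real.sqrt_mul (sq_nonneg c), Real.sqrt_sq hcpos.le, hg]
      ring
    have key0 : ∀ x : ℝ,
        (2 / Real.pi) * Real.sqrt (max (1 - 0 - x ^ 2) 0) = g x := by
      intro x; simp [hg]
    simp only [key, key0]
    -- change of variables in the inner integral
    have inner : ∀ x : ℝ,
        (∫ y : ℝ, (c * g (x / c)) * (x - y) ^ 2 * (c * g (y / c)))
          = c * ∫ b : ℝ, (c * g (x / c)) * (x - c * b) ^ 2 * (c * g b) := by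
      intro x
      have := MeasureTheory.Measure.integral_comp_div
        (fun b : ℝ => (c * g (x / c)) * (x - c * b) ^ 2 * (c * g b)) c
      simp only [mul_div_cancel₀ _ hcpos.ne'] at this
      rw [abs_of_pos hcpos, smul_eq_mul] at this
      exact this
    simp only [inner]
    rw [MeasureTheory.integral_const_mul]
    -- change of variables in the outer integral
    have outer :
        (∫ x : ℝ, ∫ b : ℝ, (c * g (x / c)) * (x - c * b) ^ 2 * (c * g b))
          = c * ∫ a : ℝ, ∫ b : ℝ, (c * g a) * (c * a - c * b) ^ 2 * (c * g b) := by
      have := MeasureTheory.Measure.integral_comp_div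
        (fun a : ℝ => ∫ b : ℝ, (c * g a) * (c * a - c * b) ^ 2 * (c * g b)) c
      simp only [mul_div_cancel₀ _ hcpos.ne'] at this
      rw [abs_of_pos hcpos, smul_eq_mul] at this
      exact this
    rw [outer]
    have hpull : ∀ a : ℝ,
        (∫ b : ℝ, (c * g a) * (c * a - c * b) ^ 2 * (c * g b))
          = c ^ 4 * ∫ b : ℝ, g a * (a - b) ^ 2 * g b := by
      intro a
      rw [← MeasureTheory.integral_const_mul]
      congr 1
      ext b
      have : (c * a - c * b) ^ 2 = c ^ 2 * (a - b) ^ 2 := by ring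
      rw [this]; ring
    simp only [hpull]
    rw [MeasureTheory.integral_const_mul]
    rw [← hc2]
    ring
end
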